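/- A pair (β̄, ᾱ) ∈ ℝ^p × ℝ^n is a saddle point of L if and only if the following three conditions hold: (a) β̄ minimizes P over ℝ^p; (b) ᾱ = Xβ̄ − y; (c) for every j ∈ {1,…,p}: if |η_j(ᾱ)| > η₀ then β̄_j = sign(η_j(ᾱ))·(|η_j(ᾱ)| − λ₁/(2λ₂)); if |η_j(ᾱ)| < η₀ then β̄_j = 0; and if |η_j(ᾱ)| = η₀ then β̄_j ∈ {0, sign(η_j(ᾱ))·(|η_j(ᾱ)| − λ₁/(2λ₂))}. -/

import Mathlib

noncomputable section

/-- ℓ₀ "norm": number of nonzero entries, as a real number. -/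
def zeroNorm {p : ℕ} (β : EuclideanSpace ℝ (Fin p)) : ℝ :=
  ((Finset.univ.filter fun j => β j ≠ 0).card : ℝ)

/-- ℓ₁ norm. -/
def oneNorm {p : ℕ} (β : EuclideanSpace ℝ (Fin p)) : ℝ := ∑ j, |β j|

/-- `X β`, where `x j` is the `j`-th column of `X`. -/
def Xmul {n p : ℕ} (x : Fin p → EuclideanSpace ℝ (Fin n))
    (β : EuclideanSpace ℝ (Fin p)) : EuclideanSpace ℝ (Fin n) :=
  ∑ j, β j • x j

/-- Primal objective `P(β)`. -/
def Pobj {n p : ℕ} (x : Fin p → EuclideanSpace ℝ (Fin n)) (y : EuclideanSpace ℝ (Fin n))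
    (l0 l1 l2 : ℝ) (β : EuclideanSpace ℝ (Fin p)) : ℝ :=
  (1/2) * ‖y - Xmul x β‖^2 + l0 * zeroNorm β + l1 * oneNorm β + l2 * ‖β‖^2

/-- Lagrangian `L(β, α)`. -/
def Lag {n p : ℕ} (x : Fin p → EuclideanSpace ℝ (Fin n)) (y : EuclideanSpace ℝ (Fin n))
    (l0 l1 l2 : ℝ) (β : EuclideanSpace ℝ (Fin p)) (α : EuclideanSpace ℝ (Fin n)) : ℝ :=
  (inner ℝ α (Xmul x β) : ℝ) - (1/2) * ‖α‖^2 - (inner ℝ y α : ℝ)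
    + l0 * zeroNorm β + l1 * oneNorm β + l2 * ‖β‖^2

/-- `η_j(α) = −⟨x_j, α⟩ / (2 λ₂)`. -/
def etav {n p : ℕ} (x : Fin p → EuclideanSpace ℝ (Fin n)) (l2 : ℝ)
    (α : EuclideanSpace ℝ (Fin n)) (j : Fin p) : ℝ :=
  -(inner ℝ (x j) α : ℝ) / (2 * l2)

/-- Threshold `η₀ = (2√(λ₀λ₂) + λ₁)/(2λ₂)`. -/
def eta0 (l0 l1 l2 : ℝ) : ℝ := (2 * Real.sqrt (l0 * l2) + l1) / (2 * l2)

/-- Scalar function `ψ` appearing in the dual objective. -/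
def psi (l0 l1 l2 : ℝ) (t : ℝ) : ℝ :=
  if eta0 l0 l1 l2 ≤ |t| then -l2 * (|t| - l1 / (2 * l2))^2 + l0 else 0

/-- Dual objective `D(α)` for the square loss. -/
def Dobj {n p : ℕ} (x : Fin p → EuclideanSpace ℝ (Fin n)) (y : EuclideanSpace ℝ (Fin n))
    (l0 l1 l2 : ℝ) (α : EuclideanSpace ℝ (Fin n)) : ℝ :=
  -(1/2) * ‖α‖^2 - (inner ℝ y α : ℝ) + ∑ j : Fin p, psi l0 l1 l2 (etav x l2 α j)

/-- Thresholding map `𝔅`. -/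
def Bth (l0 l1 l2 : ℝ) (t : ℝ) : ℝ :=
  if eta0 l0 l1 l2 ≤ |t| then Real.sign t * (|t| - l1 / (2 * l2)) else 0

/-- Primal-dual link `β(α)` with entries `β_j(α) = 𝔅(η_j(α))`. -/
def betaOf {n p : ℕ} (x : Fin p → EuclideanSpace ℝ (Fin n)) (l0 l1 l2 : ℝ)
    (α : EuclideanSpace ℝ (Fin n)) : EuclideanSpace ℝ (Fin p) :=
  WithLp.toLp 2 fun j => Bth l0 l1 l2 (etav x l2 α j)

/-- `(β̄, ᾱ)` is a saddle point of the Lagrangian `L`. -/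
def IsSaddle {n p : ℕ} (x : Fin p → EuclideanSpace ℝ (Fin n)) (y : EuclideanSpace ℝ (Fin n))
    (l0 l1 l2 : ℝ) (βb : EuclideanSpace ℝ (Fin p)) (αb : EuclideanSpace ℝ (Fin n)) : Prop :=
  (∀ α, Lag x y l0 l1 l2 βb α ≤ Lag x y l0 l1 l2 βb αb) ∧
  (∀ β, Lag x y l0 l1 l2 βb αb ≤ Lag x y l0 l1 l2 β αb)

/-!
Since `L(β, α) = P(β) - ½‖α - (Xβ - y)‖²`, maximality in `α` means `α = Xβ - y`, and then
`P(β̄) = L(β̄, ᾱ) ≤ L(β, ᾱ) ≤ P(β)`. On the other hand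
`L(β, α) = -½‖α‖² - ⟨y, α⟩ + ∑ⱼ g_{ηⱼ(α)}(βⱼ)` with `g_η(t) = λ₂t² - 2λ₂ηt + λ₁|t| + λ₀[t ≠ 0]`
(`lagCoord`), so minimality in `β` is coordinatewise. Completing the square,
`g_η(t) = λ₂(|t| - u)² - λ₂u² + 2λ₂(|η||t| - ηt) + λ₀[t ≠ 0]` with `u = |η| - λ₁/(2λ₂)`; the only
candidates are `0` and `sign η · u`, with values `0` and `λ₀ - λ₂u²`, and `λ₂u² = λ₀` is exactly
`|η| = η₀`.
-/

open Real
open scoped RealInnerProductSpace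

def lagCoord (l0 l1 l2 η t : ℝ) : ℝ :=
  l2 * t ^ 2 - 2 * l2 * η * t + l1 * |t| + if t = 0 then 0 else l0

section Scalar

variable {l0 l1 l2 η t : ℝ}

lemma mul_le_abs_mul_abs (a b : ℝ) : a * b ≤ |a| * |b| :=
  abs_mul a b ▸ le_abs_self (a * b)

lemma mul_sqrt_mul_div_sq (hl0 : 0 ≤ l0) (hl2 : 0 < l2) : l2 * (√(l0 * l2) / l2) ^ 2 = l0 := by
  rw [div_pow, Real.sq_sqrt (by positivity)]
  field_simp

lemma eta0_eq (hl2 : 0 < l2) : eta0 l0 l1 l2 = √(l0 * l2) / l2 + l1 / (2 * l2) := by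
  rw [eta0]
  field_simp

lemma ne_zero_of_eta0_le (hl0 : 0 < l0) (hl1 : 0 ≤ l1) (hl2 : 0 < l2)
    (h : eta0 l0 l1 l2 ≤ |η|) : η ≠ 0 := by
  rintro rfl
  have : 0 < √(l0 * l2) := Real.sqrt_pos.2 (by positivity)
  have : 0 < eta0 l0 l1 l2 := by rw [eta0]; positivity
  rw [abs_zero] at h
  linarith

@[simp]
lemma lagCoord_zero : lagCoord l0 l1 l2 η 0 = 0 := by
  simp [lagCoord]

lemma lagCoord_of_ne_zero (hl2 : l2 ≠ 0) (ht : t ≠ 0) :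
    lagCoord l0 l1 l2 η t = l2 * (|t| - (|η| - l1 / (2 * l2))) ^ 2
      + (l0 - l2 * (|η| - l1 / (2 * l2)) ^ 2) + 2 * l2 * (|η| * |t| - η * t) := by
  rw [lagCoord, if_neg ht, ← sq_abs t]
  field_simp
  ring

lemma eq_sign_mul_iff {u : ℝ} (hη : η ≠ 0) (hu : 0 ≤ u) :
    t = Real.sign η * u ↔ |t| = u ∧ η * t = |η| * |t| := by
  rcases hη.lt_or_gt with h | h
  · rw [Real.sign_of_neg h, abs_of_neg h]
    constructor
    · rintro rfl; simp [abs_of_nonneg hu]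
    · rintro ⟨h1, h2⟩
      cases abs_cases t <;> nlinarith
  · rw [Real.sign_of_pos h, abs_of_pos h]
    constructor
    · rintro rfl; simp [abs_of_nonneg hu]
    · rintro ⟨h1, h2⟩
      cases abs_cases t <;> nlinarith

lemma lagCoord_pos_of_abs_lt (hl0 : 0 < l0) (hl2 : 0 < l2)
    (h : |η| < eta0 l0 l1 l2) (ht : t ≠ 0) : 0 < lagCoord l0 l1 l2 η t := by
  set r := √(l0 * l2) / l2
  have hgap : 0 < r + l1 / (2 * l2) - |η| := by rw [eta0_eq hl2] at h; linarith
  have hal : 0 ≤ |η| * |t| - η * t := sub_nonneg.2 (mul_le_abs_mul_abs η t)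
  have hr : l2 * r ^ 2 = l0 := mul_sqrt_mul_div_sq hl0.le hl2
  have hid : lagCoord l0 l1 l2 η t = l2 * (|t| - r) ^ 2
      + 2 * l2 * (r + l1 / (2 * l2) - |η|) * |t| + 2 * l2 * (|η| * |t| - η * t) := by
    rw [lagCoord_of_ne_zero hl2.ne' ht, ← hr]
    field_simp
    ring
  have := abs_pos.2 ht
  rw [hid]
  positivity

lemma lagCoord_sign_mul (hl2 : l2 ≠ 0) (hη : η ≠ 0) (hu : 0 < |η| - l1 / (2 * l2)) :
    lagCoord l0 l1 l2 η (Real.sign η * (|η| - l1 / (2 * l2)))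
      = l0 - l2 * (|η| - l1 / (2 * l2)) ^ 2 := by
  obtain ⟨habs, hal⟩ := (eq_sign_mul_iff hη hu.le).1 rfl
  rw [lagCoord_of_ne_zero hl2 (by rw [← abs_ne_zero, habs]; exact hu.ne'), hal, habs]
  ring

lemma eq_sign_mul_of_lagCoord_le (hl2 : 0 < l2) (hη : η ≠ 0) (hu : 0 ≤ |η| - l1 / (2 * l2))
    (ht : t ≠ 0) (H : lagCoord l0 l1 l2 η t ≤ l0 - l2 * (|η| - l1 / (2 * l2)) ^ 2) :
    t = Real.sign η * (|η| - l1 / (2 * l2)) := by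
  rw [lagCoord_of_ne_zero hl2.ne' ht] at H
  have hal := sub_nonneg.2 (mul_le_abs_mul_abs η t)
  obtain ⟨h1, h2⟩ := (add_eq_zero_iff_of_nonneg (by positivity) (by positivity)).1
    (le_antisymm (by linarith) (by positivity) :
      l2 * (|t| - (|η| - l1 / (2 * l2))) ^ 2 + 2 * l2 * (|η| * |t| - η * t) = 0)
  refine (eq_sign_mul_iff hη hu).2 ⟨?_, ?_⟩
  · simpa [hl2.ne', sub_eq_zero] using h1
  · simpa [hl2.ne', sub_eq_zero, eq_comm] using h2

lemma lagCoord_isMin_iff_of_le (hl0 : 0 < l0) (hl1 : 0 ≤ l1) (hl2 : 0 < l2)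
    (h : eta0 l0 l1 l2 ≤ |η|) :
    (∀ s, lagCoord l0 l1 l2 η t ≤ lagCoord l0 l1 l2 η s) ↔
      t = Real.sign η * (|η| - l1 / (2 * l2)) ∨ (t = 0 ∧ |η| = eta0 l0 l1 l2) := by
  have hη := ne_zero_of_eta0_le hl0 hl1 hl2 h
  rw [eta0_eq hl2] at h ⊢
  set u := |η| - l1 / (2 * l2)
  set r := √(l0 * l2) / l2
  have hr : l2 * r ^ 2 = l0 := mul_sqrt_mul_div_sq hl0.le hl2
  have hr0 : 0 < r := by positivity
  have hru : r ≤ u := by linarith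
  have hstar : lagCoord l0 l1 l2 η (Real.sign η * u) = l0 - l2 * u ^ 2 :=
    lagCoord_sign_mul hl2.ne' hη (hr0.trans_le hru)
  have hgap : l0 ≤ l2 * u ^ 2 := by
    rw [← hr]; gcongr
  have hmin : ∀ s, lagCoord l0 l1 l2 η (Real.sign η * u) ≤ lagCoord l0 l1 l2 η s := by
    intro s
    rw [hstar]
    rcases eq_or_ne s 0 with rfl | hs
    · rw [lagCoord_zero]; linarith
    · rw [lagCoord_of_ne_zero hl2.ne' hs]
      nlinarith [mul_le_abs_mul_abs η s]
  constructor
  · intro H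
    have H' := hstar ▸ H (Real.sign η * u)
    rcases eq_or_ne t 0 with rfl | ht
    · refine Or.inr ⟨rfl, ?_⟩
      have : u ≤ r := (pow_le_pow_iff_left₀ (hr0.le.trans hru) hr0.le two_ne_zero).1
        (le_of_mul_le_mul_left (by rw [lagCoord_zero] at H'; linarith) hl2)
      linarith
    · exact Or.inl (eq_sign_mul_of_lagCoord_le hl2 hη (hr0.le.trans hru) ht H')
  · rintro (rfl | ⟨rfl, habs⟩)
    · exact hmin
    · intro s
      refine le_of_eq_of_le ?_ (hmin s)
      rw [lagCoord_zero, hstar, show u = r by linarith, hr, sub_self]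

lemma lagCoord_isMin_iff (hl0 : 0 < l0) (hl1 : 0 ≤ l1) (hl2 : 0 < l2) :
    (∀ s, lagCoord l0 l1 l2 η t ≤ lagCoord l0 l1 l2 η s) ↔
      (eta0 l0 l1 l2 < |η| → t = Real.sign η * (|η| - l1 / (2 * l2))) ∧
      (|η| < eta0 l0 l1 l2 → t = 0) ∧
      (|η| = eta0 l0 l1 l2 → t = 0 ∨ t = Real.sign η * (|η| - l1 / (2 * l2))) := by
  rcases lt_or_ge |η| (eta0 l0 l1 l2) with h | h
  · simp only [h, h.ne, h.not_gt, false_imp_iff, true_imp_iff, true_and, and_true]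
    constructor
    · intro H
      by_contra ht
      exact (lagCoord_pos_of_abs_lt hl0 hl2 h ht).not_ge (lagCoord_zero ▸ H 0)
    · rintro rfl s
      rcases eq_or_ne s 0 with rfl | hs
      · exact le_rfl
      · rw [lagCoord_zero]; exact (lagCoord_pos_of_abs_lt hl0 hl2 h hs).le
  · rw [lagCoord_isMin_iff_of_le hl0 hl1 hl2 h]
    rcases h.lt_or_eq with h | h
    · simp [h, h.ne', h.not_gt]
    · simp [h, or_comm]

end Scalar

lemma forall_sum_le_sum_iff {ι α M : Type*} [Fintype ι] [DecidableEq ι] [AddCommMonoid M]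
    [PartialOrder M] [IsOrderedCancelAddMonoid M] (f : ι → α → M) (b : ι → α) :
    (∀ c : ι → α, ∑ i, f i (b i) ≤ ∑ i, f i (c i)) ↔ ∀ i a, f i (b i) ≤ f i a := by
  refine ⟨fun h i a => ?_, fun h c => Finset.sum_le_sum fun i _ => h i (c i)⟩
  have := h (Function.update b i a)
  simp_rw [Function.apply_update f b i a] at this
  rwa [Finset.sum_update_of_mem (Finset.mem_univ i),
    Finset.sum_eq_add_sum_sdiff_singleton_of_mem (Finset.mem_univ i), add_le_add_iff_right] at this

section Lagrangian

variable {n p : ℕ} {x : Fin p → EuclideanSpace ℝ (Fin n)} {y : EuclideanSpace ℝ (Fin n)}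
  {l0 l1 l2 : ℝ}

lemma inner_Xmul (β : EuclideanSpace ℝ (Fin p)) (α : EuclideanSpace ℝ (Fin n)) :
    ⟪α, Xmul x β⟫ = ∑ j, β j * ⟪x j, α⟫ := by
  simp only [Xmul, inner_sum, real_inner_smul_right, real_inner_comm α]

lemma zeroNorm_eq_sum (β : EuclideanSpace ℝ (Fin p)) :
    zeroNorm β = ∑ j, if β j = 0 then 0 else 1 := by
  rw [zeroNorm, Finset.card_filter, Nat.cast_sum]
  exact Finset.sum_congr rfl fun j _ => by split_ifs <;> simp_all

lemma Lag_eq_sum_lagCoord (hl2 : l2 ≠ 0) (β : EuclideanSpace ℝ (Fin p))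
    (α : EuclideanSpace ℝ (Fin n)) :
    Lag x y l0 l1 l2 β α = -(1 / 2) * ‖α‖ ^ 2 - ⟪y, α⟫
      + ∑ j, lagCoord l0 l1 l2 (etav x l2 α j) (β j) := by
  have hcoord : ∀ j, lagCoord l0 l1 l2 (etav x l2 α j) (β j) = β j * ⟪x j, α⟫
      + l0 * (if β j = 0 then 0 else 1) + l1 * |β j| + l2 * β j ^ 2 := fun j => by
    rw [lagCoord, etav]; split_ifs <;> field_simp <;> ring
  simp only [hcoord, Finset.sum_add_distrib, ← Finset.mul_sum]
  rw [Lag, inner_Xmul, zeroNorm_eq_sum, oneNorm, EuclideanSpace.real_norm_sq_eq β]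
  ring

lemma Lag_eq_Pobj_sub (β : EuclideanSpace ℝ (Fin p)) (α : EuclideanSpace ℝ (Fin n)) :
    Lag x y l0 l1 l2 β α = Pobj x y l0 l1 l2 β - (1 / 2) * ‖α - (Xmul x β - y)‖ ^ 2 := by
  rw [Lag, Pobj, norm_sub_rev y, norm_sub_sq_real α, inner_sub_right, real_inner_comm y α]
  ring

lemma Lag_isMax_iff (βb : EuclideanSpace ℝ (Fin p)) (αb : EuclideanSpace ℝ (Fin n)) :
    (∀ α, Lag x y l0 l1 l2 βb α ≤ Lag x y l0 l1 l2 βb αb) ↔ αb = Xmul x βb - y := by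
  simp only [Lag_eq_Pobj_sub, sub_le_sub_iff_left]
  refine ⟨fun h => ?_, fun h α => ?_⟩
  · have := h (Xmul x βb - y)
    rw [sub_self, norm_zero] at this
    rw [← sub_eq_zero, ← norm_eq_zero]
    nlinarith [norm_nonneg (αb - (Xmul x βb - y))]
  · rw [h, sub_self, norm_zero]
    nlinarith [sq_nonneg ‖α - (Xmul x βb - y)‖]

lemma Lag_isMin_iff (hl2 : l2 ≠ 0) (βb : EuclideanSpace ℝ (Fin p))
    (αb : EuclideanSpace ℝ (Fin n)) :
    (∀ β, Lag x y l0 l1 l2 βb αb ≤ Lag x y l0 l1 l2 β αb) ↔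
      ∀ j s, lagCoord l0 l1 l2 (etav x l2 αb j) (βb j) ≤ lagCoord l0 l1 l2 (etav x l2 αb j) s := by
  simp only [Lag_eq_sum_lagCoord hl2, add_le_add_iff_left]
  rw [← forall_sum_le_sum_iff (fun j => lagCoord l0 l1 l2 (etav x l2 αb j))]
  exact ⟨fun h c => h (WithLp.toLp 2 c), fun h β => h β⟩

lemma Lag_le_Pobj (β : EuclideanSpace ℝ (Fin p)) (α : EuclideanSpace ℝ (Fin n)) :
    Lag x y l0 l1 l2 β α ≤ Pobj x y l0 l1 l2 β := by
  rw [Lag_eq_Pobj_sub]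
  nlinarith [sq_nonneg ‖α - (Xmul x β - y)‖]

lemma Lag_residual_eq_Pobj (β : EuclideanSpace ℝ (Fin p)) :
    Lag x y l0 l1 l2 β (Xmul x β - y) = Pobj x y l0 l1 l2 β := by
  rw [Lag_eq_Pobj_sub, sub_self, norm_zero]
  ring

end Lagrangian

/-- saddle point characterization. -/
theorem stmt7 (n p : ℕ) (x : Fin p → EuclideanSpace ℝ (Fin n))
    (y : EuclideanSpace ℝ (Fin n)) (l0 l1 l2 : ℝ)
    (hl0 : 0 < l0) (hl1 : 0 ≤ l1) (hl2 : 0 < l2)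
    (βb : EuclideanSpace ℝ (Fin p)) (αb : EuclideanSpace ℝ (Fin n)) :
    IsSaddle x y l0 l1 l2 βb αb ↔
      ((∀ β : EuclideanSpace ℝ (Fin p), Pobj x y l0 l1 l2 βb ≤ Pobj x y l0 l1 l2 β) ∧
       αb = Xmul x βb - y ∧
       ∀ j : Fin p,
         (eta0 l0 l1 l2 < |etav x l2 αb j| →
            βb j = Real.sign (etav x l2 αb j) * (|etav x l2 αb j| - l1 / (2 * l2))) ∧
         (|etav x l2 αb j| < eta0 l0 l1 l2 → βb j = 0) ∧
         (|etav x l2 αb j| = eta0 l0 l1 l2 →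
            βb j = 0 ∨
            βb j = Real.sign (etav x l2 αb j) * (|etav x l2 αb j| - l1 / (2 * l2)))) := by
  have hmin : (∀ β, Lag x y l0 l1 l2 βb αb ≤ Lag x y l0 l1 l2 β αb) ↔ _ :=
    (Lag_isMin_iff hl2.ne' βb αb).trans (forall_congr' fun j => lagCoord_isMin_iff hl0 hl1 hl2)
  rw [IsSaddle, Lag_isMax_iff, hmin]
  constructor
  · rintro ⟨hαb, hβb⟩
    refine ⟨fun β => ?_, hαb, hβb⟩
    calc Pobj x y l0 l1 l2 βb = Lag x y l0 l1 l2 βb αb := by rw [hαb, Lag_residual_eq_Pobj]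
      _ ≤ Lag x y l0 l1 l2 β αb := hmin.2 hβb β
      _ ≤ Pobj x y l0 l1 l2 β := Lag_le_Pobj β αb
  · rintro ⟨-, hαb, hβb⟩
    exact ⟨hαb, hβb⟩
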